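/- arXiv:2503.04226 — 8 statements merged into one kernel-verified Lean document; each statement's English description precedes it below -/
import Mathlib

section
/- Let X, Y be real normed spaces, A : X → Y continuous linear, D ⊆ Y a nonempty closed convex set, and B := A⁻¹(D) nonempty. Then the weak-* closure of the set Λ + ({0} × ℝ≥0), where Λ := {(A*λ, σ_D(λ)) : λ ∈ Y*, σ_D(λ) < ∞} ⊆ X* × ℝ, equals the epigraph of the support function σ_B of B. -/
/-! The inclusion `⊆` holds because `epi σ_B` is weak-* closed and `l (A x) ≤ σ_D(l)` for
`x ∈ B`. For `⊇`, write the set as the convex cone `{(A* l, r) : l ≤ r on D}` and separate a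
point `(φ, r)` outside its closure by a continuous functional, which on `X* × ℝ` with the weak-*
topology has the form `(ψ, t) ↦ ψ x₀ + t c`. Being bounded above on a cone, the functional is
`≤ 0` on it; by Hahn–Banach in `Y` this puts `(s - c)⁻¹ • (x₀ + s • b₀)` in `B` for a fixed
`b₀ ∈ B` and every `s > 0`, and letting `s → 0` in `φ ≤ r` at these points gives
`φ x₀ + r c ≤ 0`, contradicting the separation. -/

open Pointwise

/-- The strong dual element viewed in the weak-* dual. -/
def toWeakDual {X : Type*} [NormedAddCommGroup X] [NormedSpace ℝ X]
    (f : X →L[ℝ] ℝ) : WeakDual ℝ X := f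

open Set Filter Topology

theorem nonpos_of_forall_pos_le_mul {a K : ℝ} (h : ∀ s > 0, a ≤ s * K) : a ≤ 0 := by
  have hlim : Tendsto (fun s => s * K) (𝓝[>] 0) (𝓝 0) :=
    ((continuous_mul_const K).tendsto' 0 0 (zero_mul K)).mono_left nhdsWithin_le_nhds
  exact ge_of_tendsto hlim (eventually_nhdsWithin_of_forall h)

theorem nonpos_of_forall_pos_mul_lt {a u : ℝ} (h : ∀ r > 0, r * a < u) : a ≤ 0 := by
  by_contra! ha
  have := h ((|u| + 1) / a) (by positivity)
  rw [div_mul_cancel₀ _ ha.ne'] at this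
  linarith [le_abs_self u]

section LocallyConvex

variable {Y : Type*} [TopologicalSpace Y] [AddCommGroup Y] [Module ℝ Y]
  [IsTopologicalAddGroup Y] [ContinuousSMul ℝ Y] [LocallyConvexSpace ℝ Y] {D : Set Y}

theorem mem_of_forall_dual_le (hconv : Convex ℝ D) (hcl : IsClosed D) {y : Y}
    (h : ∀ (l : StrongDual ℝ Y) (r : ℝ), (∀ d ∈ D, l d ≤ r) → l y ≤ r) : y ∈ D := by
  rw [← RCLike.iInter_halfSpaces_eq' (𝕜 := ℝ) hconv hcl]
  simpa only [mem_iInter, mem_ofPred_eq, RCLike.re_to_real] using h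

-- a convex combination of `y / t` and `y₀` when `t > 0`; for `t = 0`, `y` is a recession direction
theorem inv_smul_add_smul_mem (hconv : Convex ℝ D) (hcl : IsClosed D) {y₀ y : Y} (hy₀ : y₀ ∈ D)
    {t : ℝ} (ht : 0 ≤ t)
    (h : ∀ (l : StrongDual ℝ Y) (r : ℝ), (∀ d ∈ D, l d ≤ r) → l y ≤ t * r) {s : ℝ} (hs : 0 < s) :
    (s + t)⁻¹ • (y + s • y₀) ∈ D := by
  refine mem_of_forall_dual_le hconv hcl fun l r hr => ?_
  rw [map_smul, map_add, map_smul, smul_eq_mul, smul_eq_mul, inv_mul_le_iff₀ (by linarith)]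
  nlinarith [h l r hr, hr y₀ hy₀]

end LocallyConvex

section WeakDual

variable {E : Type*} [AddCommGroup E] [TopologicalSpace E] [Module ℝ E]

instance : LocallyConvexSpace ℝ (WeakDual ℝ E) := WeakBilin.locallyConvexSpace

theorem WeakDual.exists_eq_eval_add_mul (f : WeakDual ℝ E × ℝ →L[ℝ] ℝ) :
    ∃ (x : E) (c : ℝ), ∀ p : WeakDual ℝ E × ℝ, f p = p.1 x + p.2 * c := by
  obtain ⟨x, hx⟩ := LinearMap.dualEmbedding_surjective (topDualPairing ℝ E) (f.comp (.inl ℝ _ ℝ))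
  refine ⟨x, f (0, 1), fun p => ?_⟩
  calc f p = f (p.1, 0) + p.2 • f (0, 1) := by rw [← map_smul, ← map_add]; simp
    _ = p.1 x + p.2 * f (0, 1) := by
      rw [smul_eq_mul, show p.1 x = WeakBilin.eval (topDualPairing ℝ E) x p.1 from rfl, hx]
      rfl

def supportEpigraph (S : Set E) : Set (WeakDual ℝ E × ℝ) :=
  {p | ∀ x ∈ S, p.1 x ≤ p.2}

theorem isClosed_supportEpigraph (S : Set E) : IsClosed (supportEpigraph S) := by
  simp only [supportEpigraph, ofPred_forall]
  exact isClosed_biInter fun x _ =>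
    isClosed_le ((WeakDual.eval_continuous x).comp continuous_fst) continuous_snd

end WeakDual

section AdjointEpi

variable {X Y : Type*} [NormedAddCommGroup X] [NormedSpace ℝ X] [NormedAddCommGroup Y]
  [NormedSpace ℝ Y]

-- `(A* × id)(epi σ_D)`: the set `Λ + ({0} × ℝ≥0)` with `σ_D(λ) ≤ r` unfolded to avoid `sSup`
def adjointEpi (A : X →L[ℝ] Y) (D : Set Y) : Set (WeakDual ℝ X × ℝ) :=
  {p | ∃ l : Y →L[ℝ] ℝ, toWeakDual (l.comp A) = p.1 ∧ ∀ y ∈ D, l y ≤ p.2}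

variable (A : X →L[ℝ] Y) {D : Set Y}

theorem barrier_add_eq_adjointEpi (hD : D.Nonempty) :
    {p : WeakDual ℝ X × ℝ | ∃ l : Y →L[ℝ] ℝ, BddAbove ((fun y => l y) '' D) ∧
        p = (toWeakDual (l.comp A), sSup ((fun y => l y) '' D))} + ({0} ×ˢ Ici (0 : ℝ))
      = adjointEpi A D := by
  ext ⟨φ, r⟩
  simp only [Set.mem_add, mem_prod, mem_singleton_iff, mem_Ici, adjointEpi, mem_ofPred_eq]
  constructor
  · rintro ⟨_, ⟨l, hbdd, rfl⟩, ⟨_, t⟩, ⟨rfl, ht⟩, hsum⟩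
    simp only [Prod.mk_add_mk, add_zero, Prod.mk.injEq] at hsum
    obtain ⟨rfl, rfl⟩ := hsum
    exact ⟨l, rfl, fun y hy =>
      (le_csSup hbdd (mem_image_of_mem _ hy)).trans (le_add_of_nonneg_right ht)⟩
  · rintro ⟨l, rfl, hl⟩
    have hbdd : BddAbove ((fun y => l y) '' D) := ⟨r, forall_mem_image.2 hl⟩
    have hσ : sSup ((fun y => l y) '' D) ≤ r := csSup_le (hD.image _) (forall_mem_image.2 hl)
    exact ⟨_, ⟨l, hbdd, rfl⟩, (0, r - sSup ((fun y => l y) '' D)), ⟨rfl, sub_nonneg.2 hσ⟩,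
      by simp⟩

theorem adjointEpi_subset_supportEpigraph : adjointEpi A D ⊆ supportEpigraph (A ⁻¹' D) := by
  rintro ⟨_, r⟩ ⟨l, rfl, hl⟩ x hx
  exact hl _ hx

theorem convex_adjointEpi : Convex ℝ (adjointEpi A D) := by
  rintro ⟨_, r₁⟩ ⟨l₁, rfl, hl₁⟩ ⟨_, r₂⟩ ⟨l₂, rfl, hl₂⟩ a b ha hb -
  refine ⟨a • l₁ + b • l₂, rfl, fun y hy => ?_⟩
  simpa using add_le_add (mul_le_mul_of_nonneg_left (hl₁ y hy) ha)
    (mul_le_mul_of_nonneg_left (hl₂ y hy) hb)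

theorem smul_mem_adjointEpi {p : WeakDual ℝ X × ℝ} (hp : p ∈ adjointEpi A D) {r : ℝ}
    (hr : 0 ≤ r) : r • p ∈ adjointEpi A D := by
  obtain ⟨l, hl, hlD⟩ := hp
  refine ⟨r • l, ?_, fun y hy => ?_⟩
  · rw [Prod.smul_fst, ← hl]; rfl
  · simpa using mul_le_mul_of_nonneg_left (hlD y hy) hr

theorem mk_zero_mem_adjointEpi {t : ℝ} (ht : 0 ≤ t) :
    ((0 : WeakDual ℝ X), t) ∈ adjointEpi A D :=
  ⟨0, rfl, fun _ _ => ht⟩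

theorem eval_add_mul_nonpos_of_mem_supportEpigraph (hconv : Convex ℝ D)
    (hcl : IsClosed D) {b₀ : X} (hb₀ : A b₀ ∈ D) {x₀ : X} {c : ℝ}
    (h : ∀ q ∈ adjointEpi A D, q.1 x₀ + q.2 * c ≤ 0) {p : WeakDual ℝ X × ℝ}
    (hp : p ∈ supportEpigraph (A ⁻¹' D)) : p.1 x₀ + p.2 * c ≤ 0 := by
  have hrec : ∀ (l : Y →L[ℝ] ℝ) (r : ℝ), (∀ d ∈ D, l d ≤ r) → l (A x₀) ≤ -c * r :=
    fun l r hl => by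
      have := h (toWeakDual (l.comp A), r) ⟨l, rfl, hl⟩
      change l (A x₀) + r * c ≤ 0 at this
      linarith
  have hc : 0 ≤ -c := by simpa using hrec 0 1 (by simp)
  refine nonpos_of_forall_pos_le_mul (K := p.2 - p.1 b₀) fun s hs => ?_
  have hz := hp _ (show (s + -c)⁻¹ • (x₀ + s • b₀) ∈ A ⁻¹' D by
    simpa using inv_smul_add_smul_mem hconv hcl hb₀ hc hrec hs)
  rw [map_smul, map_add, map_smul, smul_eq_mul, smul_eq_mul, inv_mul_le_iff₀ (by linarith)] at hz
  linarith

end AdjointEpi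

theorem wclosure_Lambda_eq_epi_support_general {X Y : Type*}
    [NormedAddCommGroup X] [NormedSpace ℝ X] [NormedAddCommGroup Y] [NormedSpace ℝ Y]
    (A : X →L[ℝ] Y) (D : Set Y) (hDcl : IsClosed D) (hDconv : Convex ℝ D)
    (hBne : (A ⁻¹' D).Nonempty) :
    closure
        ({p : WeakDual ℝ X × ℝ | ∃ l : Y →L[ℝ] ℝ, BddAbove ((fun y => l y) '' D) ∧
            p = (toWeakDual (l.comp A), sSup ((fun y => l y) '' D))}
          + ({0} ×ˢ Set.Ici (0 : ℝ)))
      = {p : WeakDual ℝ X × ℝ | ∀ x ∈ A ⁻¹' D, p.1 x ≤ p.2} := by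
  obtain ⟨b₀, hb₀ : A b₀ ∈ D⟩ := hBne
  rw [barrier_add_eq_adjointEpi A ⟨A b₀, hb₀⟩]
  change closure (adjointEpi A D) = supportEpigraph (A ⁻¹' D)
  refine (closure_minimal (adjointEpi_subset_supportEpigraph A)
    (isClosed_supportEpigraph _)).antisymm fun p hp => ?_
  by_contra hout
  obtain ⟨f, u, hfu, hup⟩ :=
    geometric_hahn_banach_closed_point (convex_adjointEpi A).closure isClosed_closure hout
  obtain ⟨x₀, c, hf⟩ := WeakDual.exists_eq_eval_add_mul f
  have hf_nonpos : ∀ q ∈ adjointEpi A D, f q ≤ 0 := fun q hq =>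
    nonpos_of_forall_pos_mul_lt fun r hr => by
      simpa using hfu _ (subset_closure (smul_mem_adjointEpi A hq hr.le))
  have hu : 0 < u := by
    simpa [Prod.mk_zero_zero] using
      hfu _ (subset_closure (mk_zero_mem_adjointEpi A (D := D) le_rfl))
  have hfp := eval_add_mul_nonpos_of_mem_supportEpigraph A hDconv hDcl hb₀
    (fun q hq => hf q ▸ hf_nonpos q hq) hp
  linarith [hf p]

/-- Lemma 1 of the paper: for `D` nonempty closed convex and `B := A⁻¹(D)` nonempty,
the weak-* closure of `Λ + ({0} × ℝ≥0)`, where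
`Λ = {(A*λ, σ_D(λ)) : λ in the barrier cone of D}`, equals `epi σ_B`. -/
theorem wclosure_Lambda_eq_epi_support {X Y : Type*}
    [NormedAddCommGroup X] [NormedSpace ℝ X] [NormedAddCommGroup Y] [NormedSpace ℝ Y]
    (A : X →L[ℝ] Y) (D : Set Y) (hDne : D.Nonempty) (hDcl : IsClosed D) (hDconv : Convex ℝ D)
    (hBne : (A ⁻¹' D).Nonempty) :
    closure
        ({p : WeakDual ℝ X × ℝ | ∃ l : Y →L[ℝ] ℝ, BddAbove ((fun y => l y) '' D) ∧
            p = (toWeakDual (l.comp A), sSup ((fun y => l y) '' D))}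
          + ({0} ×ˢ Set.Ici (0 : ℝ)))
      = {p : WeakDual ℝ X × ℝ | ∀ x ∈ A ⁻¹' D, p.1 x ≤ p.2} :=
  wclosure_Lambda_eq_epi_support_general A D hDcl hDconv hBne
end

section
/- Let X, Y be real normed spaces, A : X → Y continuous linear, C ⊆ X and D ⊆ Y nonempty closed convex sets with C ∩ A⁻¹(D) ≠ ∅. Let K := Λ + epi σ_C, where Λ := {(A*λ, σ_D(λ)) : λ ∈ Y*, σ_D(λ) < ∞}. Then the weak-* closure of K in X* × ℝ equals the epigraph of the support function of C ∩ A⁻¹(D): cl K = epi σ_{A⁻¹(D) ∩ C}. -/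
/-!
Write `K` for the cone on the left. Since `epi σ_C` contains every `(0, δ)` with `δ ≥ 0`, the gap
`σ_D(l) ≤ s` is absorbed and `K` is the pointed cone `(A* × id)(epi σ_D) + epi σ_C`. The inclusion
`cl K ⊆ epi σ_{A⁻¹(D) ∩ C}` is immediate. Conversely, a point `p` outside `cl K` is separated from
it by a weak-* continuous functional, that is, by a pair `(x, τ) ∈ X × ℝ` with `g x ≤ s τ` on `K`
and `p.2 τ < p.1 x`. Testing on `(0, 1)` gives `τ ≥ 0`, and Hahn–Banach in `X` and `Y` puts the
whole curve `(c x + x₀) / (c τ + 1)`, `c ≥ 0`, into `A⁻¹(D) ∩ C` for any `x₀` in that set.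
Evaluating `p` along it forces `p.1 x ≤ p.2 τ`.
-/

open Pointwise

section LocallyConvex

variable {E : Type*} [AddCommGroup E] [TopologicalSpace E] [IsTopologicalAddGroup E]
  [Module ℝ E] [ContinuousSMul ℝ E] [LocallyConvexSpace ℝ E]

lemma smul_add_mem_of_forall_le_mul {C : Set E} (hCcl : IsClosed C) (hCconv : Convex ℝ C)
    {x x₀ : E} {τ c : ℝ} (hx : ∀ (g : StrongDual ℝ E) (s : ℝ), (∀ y ∈ C, g y ≤ s) → g x ≤ s * τ)
    (hx₀ : x₀ ∈ C) (hτ : 0 ≤ τ) (hc : 0 ≤ c) : (c * τ + 1)⁻¹ • (c • x + x₀) ∈ C := by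
  by_contra hy
  obtain ⟨g, s, hgC, hgy⟩ := geometric_hahn_banach_closed_point hCconv hCcl hy
  have hpos : 0 < c * τ + 1 := by positivity
  have : g (c • x + x₀) < s * (c * τ + 1) := by
    rw [map_add, map_smul, smul_eq_mul]
    nlinarith [hx g s fun y hy => (hgC y hy).le, hgC x₀ hx₀]
  rw [map_smul, smul_eq_mul, lt_inv_mul_iff₀ hpos] at hgy
  linarith

end LocallyConvex

lemma nonpos_of_forall_nonneg_mul_le {𝕜 : Type*} [Field 𝕜] [LinearOrder 𝕜]
    [IsStrictOrderedRing 𝕜] {a b : 𝕜} (h : ∀ c : 𝕜, 0 ≤ c → c * a ≤ b) : a ≤ 0 := by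
  by_contra! ha
  have := h ((|b| + 1) / a) (by positivity)
  rw [div_mul_cancel₀ _ ha.ne'] at this
  linarith [le_abs_self b]

section WeakDual

variable {X : Type*} [AddCommGroup X] [TopologicalSpace X] [Module ℝ X]

instance : LocallyConvexSpace ℝ (WeakDual ℝ X) := WeakBilin.locallyConvexSpace

def epiSupport (C : Set X) : PointedCone ℝ (WeakDual ℝ X × ℝ) where
  carrier := {p | ∀ x ∈ C, p.1 x ≤ p.2}
  add_mem' hp hq x hx := add_le_add (hp x hx) (hq x hx)
  zero_mem' _ _ := le_rfl
  smul_mem' c _ hp x hx := mul_le_mul_of_nonneg_left (hp x hx) c.2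

lemma epiSupport_anti {C C' : Set X} (h : C ⊆ C') : epiSupport C' ≤ epiSupport C :=
  fun _ hp x hx => hp x (h hx)

lemma coe_epiSupport (C : Set X) :
    (epiSupport C : Set (WeakDual ℝ X × ℝ)) = ⋂ x ∈ C, {p | p.1 x ≤ p.2} := by
  ext
  simp only [Set.mem_iInter, Set.mem_ofPred_eq]
  rfl

lemma isClosed_epiSupport (C : Set X) : IsClosed (epiSupport C : Set (WeakDual ℝ X × ℝ)) := by
  rw [coe_epiSupport]
  exact isClosed_biInter fun x _ =>
    isClosed_le ((WeakDual.eval_continuous x).comp continuous_fst) continuous_snd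

lemma apply_le_mul_of_forall_smul_add_mem {S : Set X} {p : WeakDual ℝ X × ℝ}
    (hp : p ∈ epiSupport S) {x x₀ : X} {τ : ℝ} (hτ : 0 ≤ τ)
    (hS : ∀ c : ℝ, 0 ≤ c → (c * τ + 1)⁻¹ • (c • x + x₀) ∈ S) : p.1 x ≤ p.2 * τ := by
  refine sub_nonpos.1 (nonpos_of_forall_nonneg_mul_le (b := p.2 - p.1 x₀) fun c hc => ?_)
  have := hp _ (hS c hc)
  rw [map_smul, map_add, map_smul, smul_eq_mul, smul_eq_mul,
    inv_mul_le_iff₀ (by positivity)] at this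
  linarith

lemma exists_le_mul_lt_of_notMem_closure {K : PointedCone ℝ (WeakDual ℝ X × ℝ)}
    {p : WeakDual ℝ X × ℝ} (hp : p ∉ closure (K : Set (WeakDual ℝ X × ℝ))) :
    ∃ x : X, ∃ τ : ℝ, (∀ q ∈ K, q.1 x ≤ q.2 * τ) ∧ p.2 * τ < p.1 x := by
  obtain ⟨φ, hφK, hφp⟩ := ProperCone.hyperplane_separation_point (Submodule.closure K) hp
  -- every weak-* continuous functional on `WeakDual ℝ X` is evaluation at a point of `X`
  obtain ⟨x, hx⟩ :=
    LinearMap.dualEmbedding_surjective (topDualPairing ℝ X) (φ.comp (.inl ℝ _ ℝ))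
  set t := φ (0, 1)
  have hφ (q : WeakDual ℝ X × ℝ) : φ q = q.1 x + q.2 * t := by
    have hinl : φ (q.1, 0) = q.1 x := (congrArg (· q.1) hx).symm
    calc φ q = φ ((q.1, 0) + q.2 • (0, 1)) := by congr 1; ext <;> simp
      _ = q.1 x + q.2 * t := by rw [map_add, map_smul, smul_eq_mul, hinl]
  refine ⟨-x, t, fun q hq => ?_, ?_⟩
  · have := hφK q (subset_closure hq)
    rw [hφ] at this
    rw [map_neg]
    linarith
  · rw [hφ] at hφp
    rw [map_neg]
    linarith

end WeakDual

section Adjoint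

variable {X Y : Type*} [NormedAddCommGroup X] [NormedSpace ℝ X] [NormedAddCommGroup Y]
  [NormedSpace ℝ Y]

def adjointEpiSupport (A : X →L[ℝ] Y) (D : Set Y) : PointedCone ℝ (WeakDual ℝ X × ℝ) where
  carrier := {p | ∃ l : Y →L[ℝ] ℝ, (∀ y ∈ D, l y ≤ p.2) ∧ p.1 = toWeakDual (l.comp A)}
  add_mem' := by
    rintro p q ⟨l, hl, hp⟩ ⟨m, hm, hq⟩
    exact ⟨l + m, fun y hy => add_le_add (hl y hy) (hm y hy), by rw [Prod.fst_add, hp, hq]; rfl⟩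
  zero_mem' := ⟨0, fun _ _ => le_rfl, rfl⟩
  smul_mem' := by
    rintro c p ⟨l, hl, hp⟩
    exact ⟨(c : ℝ) • l, fun y hy => mul_le_mul_of_nonneg_left (hl y hy) c.2, by
      rw [Prod.smul_fst, hp]; rfl⟩

lemma adjointEpiSupport_le_epiSupport_preimage (A : X →L[ℝ] Y) (D : Set Y) :
    adjointEpiSupport A D ≤ epiSupport (A ⁻¹' D) := by
  rintro p ⟨l, hl, hp⟩ x hx
  rw [hp]
  exact hl (A x) hx

-- The paper's `Λ`: `BddAbove` encodes `σ_D(l) < ∞`, outside of which `sSup` is junk.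
def adjointSupportGraph (A : X →L[ℝ] Y) (D : Set Y) : Set (WeakDual ℝ X × ℝ) :=
  {p | ∃ l : Y →L[ℝ] ℝ, BddAbove ((fun y => l y) '' D) ∧
    p = (toWeakDual (l.comp A), sSup ((fun y => l y) '' D))}

lemma adjointSupportGraph_add_epiSupport (A : X →L[ℝ] Y) {D : Set Y} (hD : D.Nonempty)
    (C : Set X) :
    adjointSupportGraph A D + (epiSupport C : Set (WeakDual ℝ X × ℝ)) =
      (adjointEpiSupport A D ⊔ epiSupport C : PointedCone ℝ (WeakDual ℝ X × ℝ)) := by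
  rw [Submodule.coe_sup]
  refine (Set.add_subset_add_right ?_).antisymm ?_
  · rintro _ ⟨l, hl, rfl⟩
    exact ⟨l, fun y hy => le_csSup hl (Set.mem_image_of_mem _ hy), rfl⟩
  · rintro _ ⟨a, ⟨l, hl, ha⟩, e, he, rfl⟩
    have hbdd : BddAbove ((fun y => l y) '' D) := ⟨a.2, by rintro _ ⟨y, hy, rfl⟩; exact hl y hy⟩
    set σ := sSup ((fun y => l y) '' D)
    have hσ : σ ≤ a.2 := csSup_le (hD.image _) (by rintro _ ⟨y, hy, rfl⟩; exact hl y hy)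
    have hgap : ((0 : WeakDual ℝ X), a.2 - σ) ∈ epiSupport C := fun _ _ => sub_nonneg.2 hσ
    refine ⟨(toWeakDual (l.comp A), σ), ⟨l, hbdd, rfl⟩, _ + e, add_mem hgap he, ?_⟩
    show _ + (_ + e) = a + e
    rw [← add_assoc]
    congr 1
    ext
    · simp [ha]
    · simp

end Adjoint

theorem wclosure_K_eq_epi_support_inter_general {X Y : Type*}
    [NormedAddCommGroup X] [NormedSpace ℝ X] [NormedAddCommGroup Y] [NormedSpace ℝ Y]
    (A : X →L[ℝ] Y) (C : Set X) (D : Set Y)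
    (hCcl : IsClosed C) (hCconv : Convex ℝ C)
    (hDne : D.Nonempty) (hDcl : IsClosed D) (hDconv : Convex ℝ D)
    (hne : (C ∩ A ⁻¹' D).Nonempty) :
    closure
        ({p : WeakDual ℝ X × ℝ | ∃ l : Y →L[ℝ] ℝ, BddAbove ((fun y => l y) '' D) ∧
            p = (toWeakDual (l.comp A), sSup ((fun y => l y) '' D))}
          + {p : WeakDual ℝ X × ℝ | ∀ x ∈ C, p.1 x ≤ p.2})
      = {p : WeakDual ℝ X × ℝ | ∀ x ∈ A ⁻¹' D ∩ C, p.1 x ≤ p.2} := by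
  change closure (adjointSupportGraph A D + (epiSupport C : Set _)) = epiSupport (A ⁻¹' D ∩ C)
  rw [adjointSupportGraph_add_epiSupport A hDne C]
  refine (closure_minimal ?_ (isClosed_epiSupport _)).antisymm fun p hp => ?_
  · exact sup_le ((adjointEpiSupport_le_epiSupport_preimage A D).trans
      (epiSupport_anti Set.inter_subset_left)) (epiSupport_anti Set.inter_subset_right)
  by_contra hpK
  obtain ⟨x, τ, hK, hpx⟩ := exists_le_mul_lt_of_notMem_closure hpK
  obtain ⟨x₀, hx₀C, hx₀D⟩ := hne
  have hC (g : X →L[ℝ] ℝ) (s : ℝ) (hg : ∀ y ∈ C, g y ≤ s) : g x ≤ s * τ :=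
    hK (toWeakDual g, s) (le_sup_right (a := adjointEpiSupport A D) hg)
  have hD (l : Y →L[ℝ] ℝ) (β : ℝ) (hl : ∀ y ∈ D, l y ≤ β) : l (A x) ≤ β * τ :=
    hK (toWeakDual (l.comp A), β) (le_sup_left (b := epiSupport C) ⟨l, hl, rfl⟩)
  have hτ : 0 ≤ τ := by simpa using hC 0 1 fun _ _ => zero_le_one
  refine hpx.not_ge (apply_le_mul_of_forall_smul_add_mem hp hτ fun c hc => ⟨?_,
    smul_add_mem_of_forall_le_mul hCcl hCconv hC hx₀C hτ hc⟩)
  simpa using smul_add_mem_of_forall_le_mul hDcl hDconv hD hx₀D hτ hc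

/-- Lemma 3 of the paper: with `C, D` nonempty closed convex and `C ∩ A⁻¹(D) ≠ ∅`,
the weak-* closure of `K := Λ + epi σ_C` equals `epi σ_{A⁻¹(D) ∩ C}`. -/
theorem wclosure_K_eq_epi_support_inter {X Y : Type*}
    [NormedAddCommGroup X] [NormedSpace ℝ X] [NormedAddCommGroup Y] [NormedSpace ℝ Y]
    (A : X →L[ℝ] Y) (C : Set X) (D : Set Y)
    (hCne : C.Nonempty) (hCcl : IsClosed C) (hCconv : Convex ℝ C)
    (hDne : D.Nonempty) (hDcl : IsClosed D) (hDconv : Convex ℝ D)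
    (hne : (C ∩ A ⁻¹' D).Nonempty) :
    closure
        ({p : WeakDual ℝ X × ℝ | ∃ l : Y →L[ℝ] ℝ, BddAbove ((fun y => l y) '' D) ∧
            p = (toWeakDual (l.comp A), sSup ((fun y => l y) '' D))}
          + {p : WeakDual ℝ X × ℝ | ∀ x ∈ C, p.1 x ≤ p.2})
      = {p : WeakDual ℝ X × ℝ | ∀ x ∈ A ⁻¹' D ∩ C, p.1 x ≤ p.2} :=
  wclosure_K_eq_epi_support_inter_general A C D hCcl hCconv hDne hDcl hDconv hne
end

section
/- Let X, Y be real normed spaces, A : X → Y continuous linear, and D ⊆ Y a nonempty closed convex set. Then A⁻¹(D) ≠ ∅ if and only if (0, −1) does not belong to the weak-* closure of the set {(A*λ, σ_D(λ)) : λ ∈ Y*, σ_D(λ) < ∞} + ({0} × ℝ≥0) in X* × ℝ. -/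
/-!
If `A x ∈ D`, the weak-* closed half-space `{(g, t) | g x ≤ t}` contains the set and misses
`(0, -1)`. Conversely, sublinearity of the support function makes the set a convex cone, so
Hahn–Banach separation for proper cones in the locally convex space `X* × ℝ` yields a
functional that is nonnegative on its closure and negative at `(0, -1)`. Weak-* continuous
functionals are evaluations, so it is `(g, t) ↦ g x₀ + c t` with `c > 0`, and `x = -x₀ / c`
satisfies `l (A x) ≤ σ_D(l)` for every `l`; as `D` is closed and convex, this forces `A x ∈ D`.
-/

open Pointwise

instance WeakDual.instLocallyConvexSpace {X : Type*} [TopologicalSpace X] [AddCommGroup X]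
    [Module ℝ X] :
    LocallyConvexSpace ℝ (WeakDual ℝ X) :=
  WeakBilin.locallyConvexSpace

section SupportFunction

variable {Y : Type*} {D : Set Y}

lemma image_add_subset_add_image (f g : Y → ℝ) : (f + g) '' D ⊆ f '' D + g '' D := by
  rintro _ ⟨y, hy, rfl⟩
  exact Set.add_mem_add ⟨y, hy, rfl⟩ ⟨y, hy, rfl⟩

lemma bddAbove_image_add {f g : Y → ℝ} (hf : BddAbove (f '' D)) (hg : BddAbove (g '' D)) :
    BddAbove ((f + g) '' D) :=
  (hf.add hg).mono (image_add_subset_add_image f g)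

lemma sSup_image_add_le {f g : Y → ℝ} (hf : BddAbove (f '' D)) (hg : BddAbove (g '' D)) :
    sSup ((f + g) '' D) ≤ sSup (f '' D) + sSup (g '' D) := by
  rcases D.eq_empty_or_nonempty with rfl | hD
  · simp
  rw [← csSup_add (hD.image f) hf (hD.image g) hg]
  exact csSup_le_csSup (hf.add hg) (hD.image _) (image_add_subset_add_image f g)

lemma image_smul_eq_smul_image (c : ℝ) (f : Y → ℝ) : (c • f) '' D = c • f '' D := by
  rw [← Set.image_smul, Set.image_image]
  rfl

end SupportFunction

lemma mem_of_forall_le_sSup_image {Y : Type*} [TopologicalSpace Y] [AddCommGroup Y]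
    [IsTopologicalAddGroup Y] [Module ℝ Y] [ContinuousSMul ℝ Y] [LocallyConvexSpace ℝ Y]
    {D : Set Y} (hD : D.Nonempty) (hDcl : IsClosed D) (hDconv : Convex ℝ D) {y : Y}
    (h : ∀ l : StrongDual ℝ Y, BddAbove (l '' D) → l y ≤ sSup (l '' D)) :
    y ∈ D := by
  by_contra hy
  obtain ⟨l, u, hlu, hul⟩ := geometric_hahn_banach_closed_point hDconv hDcl hy
  have hbound : ∀ z ∈ l '' D, z ≤ u := by
    rintro _ ⟨y, hy, rfl⟩
    exact (hlu y hy).le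
  linarith [h l ⟨u, hbound⟩, csSup_le (hD.image _) hbound]

section SupportEpigraphCone

variable {Y : Type*} [TopologicalSpace Y] [AddCommGroup Y] [Module ℝ Y]
  {M : Type*} [AddCommGroup M] [Module ℝ M]

/-- The image under `T × id` of the epigraph of the support function `σ_D l = sSup (l '' D)` on
its domain `BddAbove (l '' D)`, i.e. `σ_D l < ∞` (elsewhere `sSup` is the junk value `0`). -/
def supportEpigraphCone (T : StrongDual ℝ Y →ₗ[ℝ] M) (D : Set Y) :
    PointedCone ℝ (M × ℝ) where
  carrier :=
    {p | ∃ l : StrongDual ℝ Y, BddAbove (l '' D) ∧ T l = p.1 ∧ sSup (l '' D) ≤ p.2}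
  zero_mem' := by
    refine ⟨0, ⟨0, ?_⟩, map_zero T, Real.sSup_nonpos ?_⟩ <;>
      · rintro _ ⟨y, -, rfl⟩
        exact le_rfl
  add_mem' := by
    rintro p q ⟨l₁, hb₁, hT₁, hσ₁⟩ ⟨l₂, hb₂, hT₂, hσ₂⟩
    refine ⟨l₁ + l₂, ?_, by simp [hT₁, hT₂], ?_⟩
    · rw [FunLike.coe_add]
      exact bddAbove_image_add hb₁ hb₂
    · rw [FunLike.coe_add, Prod.snd_add]
      linarith [sSup_image_add_le hb₁ hb₂]
  smul_mem' := by
    rintro ⟨c, hc⟩ p ⟨l, hb, hT, hσ⟩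
    refine ⟨c • l, ?_, ?_, ?_⟩
    · rw [FunLike.coe_smul, image_smul_eq_smul_image]
      exact hb.smul_of_nonneg hc
    · show T (c • l) = c • p.1
      simp [hT]
    · show _ ≤ c * p.2
      rw [FunLike.coe_smul, image_smul_eq_smul_image, Real.sSup_smul_of_nonneg hc,
        smul_eq_mul]
      exact mul_le_mul_of_nonneg_left hσ hc

lemma coe_supportEpigraphCone (T : StrongDual ℝ Y →ₗ[ℝ] M) (D : Set Y) :
    (supportEpigraphCone T D : Set (M × ℝ)) =
      {p | ∃ l : StrongDual ℝ Y, BddAbove (l '' D) ∧ p = (T l, sSup (l '' D))} +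
        {0} ×ˢ Set.Ici 0 := by
  ext p
  constructor
  · rintro ⟨l, hb, hT, hσ⟩
    refine ⟨_, ⟨l, hb, rfl⟩, (0, p.2 - sSup (l '' D)), ⟨rfl, ?_⟩, ?_⟩
    · simpa using hσ
    · ext <;> simp [hT]
  · rintro ⟨_, ⟨l, hb, rfl⟩, ⟨z, t⟩, ⟨hz, ht⟩, rfl⟩
    refine ⟨l, hb, by simp_all, by simpa using ht⟩

end SupportEpigraphCone

section WeakDualAdjoint

variable {X Y : Type*} [TopologicalSpace X] [AddCommGroup X] [Module ℝ X]
  [TopologicalSpace Y] [AddCommGroup Y] [Module ℝ Y]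

noncomputable def weakDualAdjoint (A : X →L[ℝ] Y) :
    StrongDual ℝ Y →ₗ[ℝ] WeakDual ℝ X where
  toFun l := StrongDual.toWeakDual (l.comp A)
  map_add' _ _ := rfl
  map_smul' _ _ := rfl

@[simp]
lemma weakDualAdjoint_apply (A : X →L[ℝ] Y) (l : StrongDual ℝ Y) (x : X) :
    weakDualAdjoint A l x = l (A x) :=
  rfl

lemma notMem_closure_supportEpigraphCone {A : X →L[ℝ] Y} {D : Set Y} {x : X} (hx : A x ∈ D) :
    ((0 : WeakDual ℝ X), (-1 : ℝ)) ∉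
      closure (supportEpigraphCone (weakDualAdjoint A) D : Set _) := by
  have hcone : (supportEpigraphCone (weakDualAdjoint A) D : Set _) ⊆
      {p : WeakDual ℝ X × ℝ | p.1 x ≤ p.2} := by
    rintro p ⟨l, hb, hT, hσ⟩
    rw [Set.mem_ofPred_eq, ← hT, weakDualAdjoint_apply]
    exact (le_csSup hb ⟨A x, hx, rfl⟩).trans hσ
  have hclosed : IsClosed {p : WeakDual ℝ X × ℝ | p.1 x ≤ p.2} :=
    isClosed_le ((WeakDual.eval_continuous x).comp continuous_fst) continuous_snd
  intro h
  have : (0 : ℝ) ≤ -1 := closure_minimal hcone hclosed h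
  norm_num at this

lemma exists_mem_preimage_of_notMem_closure [IsTopologicalAddGroup Y] [ContinuousSMul ℝ Y]
    [LocallyConvexSpace ℝ Y] {A : X →L[ℝ] Y} {D : Set Y} (hD : D.Nonempty) (hDcl : IsClosed D)
    (hDconv : Convex ℝ D)
    (h : ((0 : WeakDual ℝ X), (-1 : ℝ)) ∉
      closure (supportEpigraphCone (weakDualAdjoint A) D : Set _)) :
    ∃ x, A x ∈ D := by
  obtain ⟨f, hf_nonneg, hf_neg⟩ := ProperCone.hyperplane_separation_point
    (Submodule.closure (supportEpigraphCone (weakDualAdjoint A) D)) h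
  obtain ⟨x₀, hx₀⟩ := LinearMap.dualEmbedding_surjective (topDualPairing ℝ X)
    (f.comp (ContinuousLinearMap.inl ℝ _ ℝ))
  have heval : ∀ g : WeakDual ℝ X, f (g, 0) = g x₀ :=
    fun g => (DFunLike.congr_fun hx₀ g).symm
  set c := f (0, 1)
  have hf_eq : ∀ p : WeakDual ℝ X × ℝ, f p = p.1 x₀ + p.2 * c := by
    rintro ⟨g, t⟩
    calc f (g, t) = f ((g, 0) + t • (0, 1)) := by simp
      _ = g x₀ + t * c := by rw [map_add, map_smul, heval, smul_eq_mul]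
  have hc : 0 < c := by
    have : f (-(0, 1)) < 0 := by simpa using hf_neg
    rwa [map_neg, neg_lt_zero] at this
  refine ⟨-c⁻¹ • x₀, mem_of_forall_le_sSup_image hD hDcl hDconv fun l hl => ?_⟩
  have hl_nonneg := hf_nonneg (weakDualAdjoint A l, sSup (l '' D))
    (subset_closure ⟨l, hl, rfl, le_rfl⟩)
  rw [hf_eq, weakDualAdjoint_apply] at hl_nonneg
  rw [map_smul, map_smul, smul_eq_mul, neg_mul, neg_le, le_inv_mul_iff₀ hc]
  linarith

end WeakDualAdjoint

/-- Corollary 3 of the paper: for `D` nonempty closed convex, `A⁻¹(D) ≠ ∅` iff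
`(0, −1)` is not in the weak-* closure of `Λ + ({0} × ℝ≥0)`. -/
theorem preimage_nonempty_iff_not_mem_wclosure {X Y : Type*}
    [NormedAddCommGroup X] [NormedSpace ℝ X] [NormedAddCommGroup Y] [NormedSpace ℝ Y]
    (A : X →L[ℝ] Y) (D : Set Y)
    (hDne : D.Nonempty) (hDcl : IsClosed D) (hDconv : Convex ℝ D) :
    (A ⁻¹' D).Nonempty ↔
      ((0 : WeakDual ℝ X), (-1 : ℝ)) ∉
        closure
          ({p : WeakDual ℝ X × ℝ | ∃ l : Y →L[ℝ] ℝ, BddAbove ((fun y => l y) '' D) ∧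
              p = (toWeakDual (l.comp A), sSup ((fun y => l y) '' D))}
            + ({0} ×ˢ Set.Ici (0 : ℝ))) := by
  have key : (A ⁻¹' D).Nonempty ↔ ((0 : WeakDual ℝ X), (-1 : ℝ)) ∉
      closure (supportEpigraphCone (weakDualAdjoint A) D : Set (WeakDual ℝ X × ℝ)) :=
    ⟨fun ⟨_, hx⟩ => notMem_closure_supportEpigraphCone hx,
      exists_mem_preimage_of_notMem_closure hDne hDcl hDconv⟩
  rwa [coe_supportEpigraphCone] at key
end

section
/- Let X, Y be real normed spaces, A : X → Y continuous linear, C ⊆ X and D ⊆ Y nonempty convex sets, f : X → ℝ ∪ {+∞} proper convex with C ∩ dom f ≠ ∅. Define F₀ := ⋃_{x ∈ C ∩ dom f} {(A x, f(x))} + (−D) × ℝ≥0 ⊆ Y × ℝ. Then the implication [ (∀ x ∈ C with A x ∈ D, f(x) ≥ 0) ⟹ (∃ λ ∈ Y* with σ_D(λ) < ∞ and f(x) + ⟨λ, A x⟩ ≥ σ_D(λ) for all x ∈ C) ] holds if and only if the convex cone ℝ≥0 · F₀ is closed regarding {(0, −1)} in Y × ℝ. -/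
/-!
The hypothesis `∀ x ∈ C, A x ∈ D → x ∈ S → 0 ≤ f x` fails exactly when some `(0, f x)` with
`f x < 0` lies in `F₀`, i.e. exactly when `(0, -1) ∈ R`. A functional `λ` as in the conclusion is
the same as a closed half-space `{(y, r) | 0 ≤ λ y + r}` containing the convex cone `R`, and by
Hahn–Banach separation for cones such a half-space exists exactly when `(0, -1) ∉ closure R`.
The equivalence is then the tautology `(¬a → ¬b) ↔ (a ∨ ¬b)`.
-/

open Pointwise Set

def Convex.toPointedCone {E : Type*} [AddCommGroup E] [Module ℝ E] {s : Set E}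
    (hs : Convex ℝ s) (hne : s.Nonempty) : PointedCone ℝ E where
  carrier := Ici (0 : ℝ) • s
  zero_mem' := by
    obtain ⟨y, hy⟩ := hne
    exact ⟨0, self_mem_Ici, y, hy, zero_smul ℝ y⟩
  add_mem' := by
    rintro _ _ ⟨t₁, ht₁, y₁, hy₁, rfl⟩ ⟨t₂, ht₂, y₂, hy₂, rfl⟩
    obtain ⟨y, hy, hyeq⟩ : t₁ • y₁ + t₂ • y₂ ∈ (t₁ + t₂) • s := by
      rw [hs.add_smul ht₁ ht₂]
      exact add_mem_add (smul_mem_smul_set hy₁) (smul_mem_smul_set hy₂)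
    exact ⟨t₁ + t₂, mem_Ici.2 (add_nonneg ht₁ ht₂), y, hy, hyeq⟩
  smul_mem' := by
    rintro c _ ⟨t, ht, y, hy, rfl⟩
    exact ⟨c * t, mul_nonneg c.2 ht, y, hy, (mul_smul _ _ _).trans (NNReal.smul_def c _).symm⟩

section
variable {E : Type*} [AddCommGroup E] [TopologicalSpace E] [IsTopologicalAddGroup E]
  [Module ℝ E] [ContinuousSMul ℝ E] [LocallyConvexSpace ℝ E]

theorem PointedCone.zero_neg_one_notMem_closure_iff (K : PointedCone ℝ (E × ℝ)) :
    ((0 : E), (-1 : ℝ)) ∉ closure (K : Set (E × ℝ)) ↔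
      ∃ l : E →L[ℝ] ℝ, ∀ q ∈ K, 0 ≤ l q.1 + q.2 := by
  constructor
  · intro h
    obtain ⟨g, hgK, hg⟩ := ProperCone.hyperplane_separation_point (Submodule.closure K) h
    set c := g (0, 1)
    have hc : 0 < c := by
      have : g (0, -1) = -c := by rw [← map_neg, Prod.neg_mk, neg_zero]
      linarith
    refine ⟨c⁻¹ • g.comp (.inl ℝ E ℝ), fun q hq => ?_⟩
    have hgq : g q = g (q.1, 0) + q.2 * c := by
      calc g q = g ((q.1, 0) + q.2 • (0, 1)) := by congr 1; ext <;> simp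
        _ = g (q.1, 0) + q.2 * c := by rw [map_add, map_smul, smul_eq_mul]
    calc 0 ≤ c⁻¹ * g q := mul_nonneg (inv_nonneg.2 hc.le) (hgK q (subset_closure hq))
      _ = (c⁻¹ • g.comp (.inl ℝ E ℝ)) q.1 + q.2 := by simp [hgq]; field_simp
  · rintro ⟨l, hl⟩ h
    have hclosed : IsClosed {q : E × ℝ | 0 ≤ l q.1 + q.2} :=
      isClosed_le continuous_const (by fun_prop)
    have := hclosed.closure_subset_iff.2 hl h
    norm_num at this
end

section
variable {X Y : Type*} [AddCommGroup Y] [Module ℝ Y]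

theorem ConvexOn.convex_image_add_prod_Ici [AddCommGroup X] [Module ℝ X] {A : X →ₗ[ℝ] Y}
    {f : X → ℝ} {s : Set X} {D : Set Y} (hf : ConvexOn ℝ s f) (hD : Convex ℝ D) :
    Convex ℝ ((fun x => (A x, f x)) '' s + D ×ˢ Ici (0 : ℝ)) := by
  have hL : IsLinearMap ℝ fun p : (X × ℝ) × Y => (A p.1.1 + p.2, p.1.2) :=
    ⟨fun p q => by simp [add_add_add_comm], fun c p => by simp [smul_add]⟩
  suffices (fun x => (A x, f x)) '' s + D ×ˢ Ici (0 : ℝ) =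
      (fun p : (X × ℝ) × Y => (A p.1.1 + p.2, p.1.2)) '' ({p | p.1 ∈ s ∧ f p.1 ≤ p.2} ×ˢ D) by
    rw [this]
    exact (hf.convex_epigraph.prod hD).is_linear_image hL
  ext q
  constructor
  · rintro ⟨_, ⟨x, hx, rfl⟩, ⟨d, r⟩, ⟨hd, hr⟩, rfl⟩
    exact ⟨((x, f x + r), d), ⟨⟨hx, le_add_of_nonneg_right hr⟩, hd⟩, by simp [add_comm]⟩
  · rintro ⟨⟨⟨x, r⟩, d⟩, ⟨⟨hx, hxr⟩, hd⟩, rfl⟩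
    exact ⟨(A x, f x), ⟨x, hx, rfl⟩, (d, r - f x), ⟨hd, sub_nonneg.2 hxr⟩, by simp⟩

theorem zero_neg_one_mem_Ici_smul_image_add_prod_iff {A : X → Y} {f : X → ℝ} {s : Set X}
    {D : Set Y} :
    ((0 : Y), (-1 : ℝ)) ∈ Ici (0 : ℝ) • ((fun x => (A x, f x)) '' s + (-D) ×ˢ Ici 0) ↔
      ∃ x ∈ s, A x ∈ D ∧ f x < 0 := by
  constructor
  · rintro ⟨t, ht, _, ⟨_, ⟨x, hx, rfl⟩, ⟨d, r⟩, ⟨hd, hr⟩, rfl⟩, hq⟩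
    simp only [Prod.mk_add_mk, Prod.smul_mk, Prod.mk.injEq, smul_eq_mul] at hq
    obtain ⟨hA, hf⟩ := hq
    have ht0 : t ≠ 0 := by rintro rfl; simp at hf
    rw [smul_eq_zero_iff_right ht0, add_eq_zero_iff_eq_neg] at hA
    exact ⟨x, hx, hA ▸ mem_neg.1 hd, by nlinarith [mem_Ici.1 ht, mem_Ici.1 hr]⟩
  · rintro ⟨x, hx, hAx, hfx⟩
    refine ⟨(-f x)⁻¹, inv_nonneg.2 (neg_nonneg.2 hfx.le), (0, f x),
      ⟨(A x, f x), mem_image_of_mem _ hx, (-A x, 0), ⟨neg_mem_neg.2 hAx, self_mem_Ici⟩, by simp⟩,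
      ?_⟩
    simp [hfx.ne]

theorem forall_mem_Ici_smul_image_add_prod_nonneg_iff {A : X → Y} {f : X → ℝ} {s : Set X}
    {D : Set Y} {F : Type*} [FunLike F Y ℝ] [LinearMapClass F ℝ Y ℝ] (l : F) :
    (∀ q ∈ Ici (0 : ℝ) • ((fun x => (A x, f x)) '' s + (-D) ×ˢ Ici 0), 0 ≤ l q.1 + q.2) ↔
      ∀ x ∈ s, ∀ d ∈ D, l d ≤ f x + l (A x) := by
  constructor
  · intro h x hx d hd
    have := h (A x - d, f x) ⟨1, mem_Ici.2 zero_le_one, _, ⟨(A x, f x), mem_image_of_mem _ hx,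
      (-d, 0), ⟨neg_mem_neg.2 hd, self_mem_Ici⟩, by simp [sub_eq_add_neg]⟩, one_smul ℝ _⟩
    rw [map_sub] at this
    linarith
  · rintro h _ ⟨t, ht, _, ⟨_, ⟨x, hx, rfl⟩, ⟨d, r⟩, ⟨hd, hr⟩, rfl⟩, rfl⟩
    have hxd : 0 ≤ l (A x) + l d + (f x + r) := by
      have := h x hx (-d) hd
      rw [map_neg] at this
      linarith [mem_Ici.1 hr]
    simpa [map_smul, mul_add] using mul_nonneg (mem_Ici.1 ht) hxd

end

theorem forall_le_iff_bddAbove_and_csSup_le {α β : Type*} {φ : β → ℝ} {h : α → ℝ} {s : Set α}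
    {D : Set β} (hs : s.Nonempty) (hD : D.Nonempty) :
    (∀ x ∈ s, ∀ d ∈ D, φ d ≤ h x) ↔ BddAbove (φ '' D) ∧ ∀ x ∈ s, sSup (φ '' D) ≤ h x := by
  constructor
  · intro H
    obtain ⟨x₀, hx₀⟩ := hs
    exact ⟨⟨h x₀, forall_mem_image.2 (H x₀ hx₀)⟩,
      fun x hx => csSup_le (hD.image φ) (forall_mem_image.2 (H x hx))⟩
  · rintro ⟨hbdd, H⟩ x hx d hd
    exact (le_csSup hbdd (mem_image_of_mem φ hd)).trans (H x hx)

theorem farkas_second_characterization_general {X Y : Type*}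
    [NormedAddCommGroup X] [NormedSpace ℝ X] [NormedAddCommGroup Y] [NormedSpace ℝ Y]
    (A : X →L[ℝ] Y) (C : Set X) (D : Set Y)
    (hCconv : Convex ℝ C) (hDne : D.Nonempty) (hDconv : Convex ℝ D)
    (S : Set X) (f : X → ℝ) (hf : ConvexOn ℝ S f) (hCS : (C ∩ S).Nonempty)
    (F₀ R : Set (Y × ℝ))
    (hF₀ : F₀ = (fun x => (A x, f x)) '' (C ∩ S) + (-D) ×ˢ Set.Ici (0 : ℝ))
    (hR : R = (Set.Ici (0 : ℝ)) • F₀) :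
    ((∀ x ∈ C, A x ∈ D → x ∈ S → 0 ≤ f x) →
        ∃ l : Y →L[ℝ] ℝ, BddAbove ((fun y => l y) '' D) ∧
          ∀ x ∈ C ∩ S, sSup ((fun y => l y) '' D) ≤ f x + l (A x)) ↔
      (((0 : Y), (-1 : ℝ)) ∈ R ∨ ((0 : Y), (-1 : ℝ)) ∉ closure R) := by
  have hF₀conv : Convex ℝ F₀ := hF₀ ▸
    (hf.subset inter_subset_right (hCconv.inter hf.1)).convex_image_add_prod_Ici
      (A := A.toLinearMap) hDconv.neg
  have hF₀ne : F₀.Nonempty := hF₀ ▸ (hCS.image _).add (hDne.neg.prod nonempty_Ici)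
  have hRK : R = hF₀conv.toPointedCone hF₀ne := hR
  have hP : (∀ x ∈ C, A x ∈ D → x ∈ S → 0 ≤ f x) ↔ ((0 : Y), (-1 : ℝ)) ∉ R := by
    rw [hR, hF₀, zero_neg_one_mem_Ici_smul_image_add_prod_iff]
    aesop
  have hQ : (∃ l : Y →L[ℝ] ℝ, BddAbove ((fun y => l y) '' D) ∧
      ∀ x ∈ C ∩ S, sSup ((fun y => l y) '' D) ≤ f x + l (A x)) ↔
        ((0 : Y), (-1 : ℝ)) ∉ closure R := by
    rw [hRK, PointedCone.zero_neg_one_notMem_closure_iff]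
    refine exists_congr fun l => ?_
    rw [← forall_le_iff_bddAbove_and_csSup_le hCS hDne,
      ← forall_mem_Ici_smul_image_add_prod_nonneg_iff l, ← hF₀]
    rfl
  rw [hP, hQ]
  tauto

/-- Theorem 2 (2nd characterization of Farkas' Lemma).  The proper convex function
`f : X → ℝ ∪ {+∞}` is modelled by its effective domain `S` and a real-valued `f`
convex on `S`.  With `F₀ := {(A x, f x) : x ∈ C ∩ S} + (−D) × ℝ≥0`, the implication
"[(∀ x ∈ C, A x ∈ D → f(x) ≥ 0) ⟹ (∃ λ in the barrier cone of D with
f(x) + ⟨λ, A x⟩ ≥ σ_D(λ) for all x ∈ C)]" holds iff the convex cone `ℝ≥0 • F₀` is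
closed regarding `{(0, −1)}` in `Y × ℝ`. -/
theorem farkas_second_characterization {X Y : Type*}
    [NormedAddCommGroup X] [NormedSpace ℝ X] [NormedAddCommGroup Y] [NormedSpace ℝ Y]
    (A : X →L[ℝ] Y) (C : Set X) (D : Set Y)
    (hCne : C.Nonempty) (hCconv : Convex ℝ C) (hDne : D.Nonempty) (hDconv : Convex ℝ D)
    (S : Set X) (f : X → ℝ) (hf : ConvexOn ℝ S f) (hCS : (C ∩ S).Nonempty)
    (F₀ R : Set (Y × ℝ))
    (hF₀ : F₀ = (fun x => (A x, f x)) '' (C ∩ S) + (-D) ×ˢ Set.Ici (0 : ℝ))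
    (hR : R = (Set.Ici (0 : ℝ)) • F₀) :
    ((∀ x ∈ C, A x ∈ D → x ∈ S → 0 ≤ f x) →
        ∃ l : Y →L[ℝ] ℝ, BddAbove ((fun y => l y) '' D) ∧
          ∀ x ∈ C ∩ S, sSup ((fun y => l y) '' D) ≤ f x + l (A x)) ↔
      (((0 : Y), (-1 : ℝ)) ∈ R ∨ ((0 : Y), (-1 : ℝ)) ∉ closure R) :=
  farkas_second_characterization_general A C D hCconv hDne hDconv S f hf hCS F₀ R hF₀ hR
end

section
/- Let X, Y be real normed spaces, A : X → Y continuous linear, a' ∈ X*, and Q ⊆ Y a nonempty convex cone. Then the equivalence [ (∀ x, A x ∈ Q ⟹ ⟨a', x⟩ ≥ 0) ⟺ (∃ μ ∈ Q⁺ with A*μ = a') ] holds if and only if the set ⋃_{x∈X} {(A x, ⟨a', x⟩)} + (−Q) × ℝ≥0 is closed regarding {(0, −1)} in Y × ℝ. -/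
/-!
Write `S` for the set `{(A x, a' x)} + (-Q) × ℝ≥0`, so that `(y, t) ∈ S` iff some `x` has
`A x - y ∈ Q` and `a' x ≤ t`. Since `Q` is a cone, `(0, -1) ∈ S` says exactly that the primal
statement fails. A dual certificate `μ` makes `μ y ≤ t` on `S`, hence on its closure, so it keeps
`(0, -1)` out of the closure; conversely, `S` is a convex cone whose closure contains the graph of
`(A, a')`, and a functional separating `(0, -1)` from that closure can be normalised to a
certificate. Thus the dual statement is equivalent to `(0, -1) ∉ closure S` and implies the primal
one, and the claimed equivalence is propositional logic.
-/

open Pointwise Filter Topology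

theorem exists_dual_neg_of_notMem_closure_cone {E : Type*} [TopologicalSpace E] [AddCommGroup E]
    [IsTopologicalAddGroup E] [Module ℝ E] [ContinuousSMul ℝ E] [LocallyConvexSpace ℝ E]
    {K : Set E} (hconv : Convex ℝ K) (hsmul : ∀ t : ℝ, 0 < t → ∀ z ∈ K, t • z ∈ K)
    (h0 : (0 : E) ∈ closure K) {p : E} (hp : p ∉ closure K) :
    ∃ f : StrongDual ℝ E, f p < 0 ∧ ∀ z ∈ closure K, 0 ≤ f z := by
  obtain ⟨f, u, hpu, hu⟩ := geometric_hahn_banach_point_closed hconv.closure isClosed_closure hp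
  have hu0 : u < 0 := by simpa using hu 0 h0
  have hK : K ⊆ {z | 0 ≤ f z} := by
    intro z hz
    show 0 ≤ f z
    by_contra! hfz
    -- rescaling `z` so that `f` takes the value `u` on it contradicts the strict separation
    have := hu ((u / f z) • z) (subset_closure (hsmul _ (div_pos_of_neg_of_neg hu0 hfz) z hz))
    simp [hfz.ne] at this
  exact ⟨f, hpu.trans hu0, closure_minimal hK (isClosed_le continuous_const f.continuous)⟩

section FarkasSet

variable {X Y : Type*} [TopologicalSpace X] [AddCommGroup X] [Module ℝ X]
  [TopologicalSpace Y] [AddCommGroup Y] [Module ℝ Y]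
  (A : X →L[ℝ] Y) (a' : X →L[ℝ] ℝ)

def farkasSet (Q : Set Y) : Set (Y × ℝ) :=
  Set.range (fun x => (A x, a' x)) + (-Q) ×ˢ Set.Ici 0

variable {Q : Set Y}

theorem mem_farkasSet {z : Y × ℝ} :
    z ∈ farkasSet A a' Q ↔ ∃ x, A x - z.1 ∈ Q ∧ a' x ≤ z.2 := by
  constructor
  · rintro ⟨_, ⟨x, rfl⟩, w, ⟨hw₁, hw₂⟩, rfl⟩
    refine ⟨x, ?_, ?_⟩
    · simpa using hw₁
    · simpa using hw₂
  · rintro ⟨x, hxQ, hx⟩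
    refine ⟨_, ⟨x, rfl⟩, (z.1 - A x, z.2 - a' x), ⟨?_, ?_⟩, ?_⟩
    · simpa using hxQ
    · simpa using hx
    · simp

theorem convex_farkasSet (hQ : Convex ℝ Q) : Convex ℝ (farkasSet A a' Q) := by
  refine Convex.add ?_ (hQ.neg.prod (convex_Ici 0))
  have : Set.range (fun x => (A x, a' x)) = (A.toLinearMap.prod a'.toLinearMap) '' Set.univ := by
    rw [Set.image_univ]; rfl
  exact this ▸ convex_univ.linear_image _

theorem smul_mem_farkasSet (hQ : ∀ c : ℝ, 0 < c → ∀ y ∈ Q, c • y ∈ Q) {t : ℝ} (ht : 0 < t)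
    {z : Y × ℝ} (hz : z ∈ farkasSet A a' Q) : t • z ∈ farkasSet A a' Q := by
  obtain ⟨x, hxQ, hx⟩ := (mem_farkasSet A a').1 hz
  refine (mem_farkasSet A a').2 ⟨t • x, ?_, ?_⟩
  · simpa [smul_sub] using hQ t ht _ hxQ
  · simpa using mul_le_mul_of_nonneg_left hx ht.le

theorem zero_neg_one_mem_farkasSet_iff (hQ : ∀ c : ℝ, 0 < c → ∀ y ∈ Q, c • y ∈ Q) :
    ((0 : Y), (-1 : ℝ)) ∈ farkasSet A a' Q ↔ ¬ ∀ x, A x ∈ Q → 0 ≤ a' x := by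
  simp only [mem_farkasSet, sub_zero, not_forall, not_le]
  constructor
  · rintro ⟨x, hxQ, hx⟩
    exact ⟨x, hxQ, by linarith⟩
  · rintro ⟨x, hxQ, hx⟩
    refine ⟨(-a' x)⁻¹ • x, by simpa using hQ _ (inv_pos.2 (neg_pos.2 hx)) _ hxQ, ?_⟩
    simp [inv_mul_cancel₀ hx.ne]

theorem zero_neg_one_notMem_closure_farkasSet {μ : Y →L[ℝ] ℝ} (hμ : ∀ y ∈ Q, 0 ≤ μ y)
    (hμA : μ.comp A = a') : ((0 : Y), (-1 : ℝ)) ∉ closure (farkasSet A a' Q) := by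
  have hS : farkasSet A a' Q ⊆ {z | μ z.1 ≤ z.2} := by
    intro z hz
    obtain ⟨x, hxQ, hx⟩ := (mem_farkasSet A a').1 hz
    have := hμ _ hxQ
    rw [map_sub, ← ContinuousLinearMap.comp_apply, hμA] at this
    exact (sub_nonneg.1 this).trans hx
  intro h
  have := closure_minimal hS (isClosed_le (by fun_prop) continuous_snd) h
  norm_num at this

variable [IsTopologicalAddGroup Y] [ContinuousSMul ℝ Y]

theorem mem_closure_farkasSet (hne : Q.Nonempty) (hQ : ∀ c : ℝ, 0 < c → ∀ y ∈ Q, c • y ∈ Q)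
    (x : X) : (A x, a' x) ∈ closure (farkasSet A a' Q) := by
  obtain ⟨q, hq⟩ := hne
  have hlim : Tendsto (fun t : ℝ => (A x - t • q, a' x)) (𝓝[>] 0) (𝓝 (A x, a' x)) := by
    have := (by fun_prop : Continuous fun t : ℝ => (A x - t • q, a' x)).tendsto 0
    simpa using this.mono_left nhdsWithin_le_nhds
  refine mem_closure_of_tendsto hlim (eventually_nhdsWithin_of_forall fun t ht => ?_)
  exact (mem_farkasSet A a').2 ⟨x, by simpa using hQ t ht q hq, le_rfl⟩

theorem exists_dual_of_zero_neg_one_notMem_closure_farkasSet [LocallyConvexSpace ℝ Y]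
    (hne : Q.Nonempty) (hconv : Convex ℝ Q) (hQ : ∀ c : ℝ, 0 < c → ∀ y ∈ Q, c • y ∈ Q)
    (h : ((0 : Y), (-1 : ℝ)) ∉ closure (farkasSet A a' Q)) :
    ∃ μ : Y →L[ℝ] ℝ, (∀ y ∈ Q, 0 ≤ μ y) ∧ μ.comp A = a' := by
  obtain ⟨f, hf₀, hf⟩ := exists_dual_neg_of_notMem_closure_cone (convex_farkasSet A a' hconv)
    (fun t ht z hz => smul_mem_farkasSet A a' hQ ht hz)
    (by simpa [Prod.mk_zero_zero] using mem_closure_farkasSet A a' hne hQ 0) h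
  set g : Y →L[ℝ] ℝ := f.comp (ContinuousLinearMap.inl ℝ Y ℝ)
  set α : ℝ := f (0, 1)
  have hf_apply : ∀ y t, f (y, t) = g y + t * α := by
    intro y t
    have : (y, t) = (y, 0) + t • ((0 : Y), (1 : ℝ)) := by simp
    rw [this, map_add, map_smul, smul_eq_mul]
    rfl
  have hα : 0 < α := by simpa [hf_apply] using hf₀
  have hgQ : ∀ q ∈ Q, g q ≤ 0 := by
    intro q hq
    have := hf (-q, 0)
      (subset_closure ((mem_farkasSet A a').2 ⟨0, by simpa using hq, (map_zero a').le⟩))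
    simpa [hf_apply] using this
  have hgA : ∀ x, g (A x) + α * a' x = 0 := by
    intro x
    have h₁ := hf _ (mem_closure_farkasSet A a' hne hQ x)
    have h₂ := hf _ (mem_closure_farkasSet A a' hne hQ (-x))
    simp only [hf_apply, map_neg] at h₁ h₂
    linarith
  refine ⟨-α⁻¹ • g, fun q hq => ?_, ?_⟩
  · simpa using mul_nonpos_of_nonneg_of_nonpos (inv_pos.2 hα).le (hgQ q hq)
  · ext x
    have := hgA x
    simp only [ContinuousLinearMap.comp_apply, smul_apply, smul_eq_mul]
    field_simp
    linarith

end FarkasSet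

/-- Corollary 2 of the paper: for `a' ∈ X*` and a nonempty convex cone `Q ⊆ Y`
(not necessarily closed, not necessarily containing the origin), the equivalence
"[(∀ x, A x ∈ Q → ⟨a', x⟩ ≥ 0) ⟺ (∃ μ ∈ Q⁺, A*μ = a')]" holds iff the set
`{(A x, ⟨a', x⟩) : x ∈ X} + (−Q) × ℝ≥0` is closed regarding `{(0, −1)}`. -/
theorem farkas_homogeneous_primal_characterization {X Y : Type*}
    [NormedAddCommGroup X] [NormedSpace ℝ X] [NormedAddCommGroup Y] [NormedSpace ℝ Y]
    (A : X →L[ℝ] Y) (a' : X →L[ℝ] ℝ) (Q : Set Y)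
    (hQne : Q.Nonempty) (hQconv : Convex ℝ Q)
    (hQcone : ∀ c : ℝ, 0 < c → ∀ y ∈ Q, c • y ∈ Q)
    (E : Set (Y × ℝ))
    (hE : E = Set.range (fun x => (A x, a' x)) + (-Q) ×ˢ Set.Ici (0 : ℝ)) :
    ((∀ x : X, A x ∈ Q → 0 ≤ a' x) ↔
        ∃ μ : Y →L[ℝ] ℝ, (∀ y ∈ Q, 0 ≤ μ y) ∧ μ.comp A = a') ↔
      (((0 : Y), (-1 : ℝ)) ∈ E ∨ ((0 : Y), (-1 : ℝ)) ∉ closure E) := by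
  obtain rfl : E = farkasSet A a' Q := hE
  have hclosure : ((0 : Y), (-1 : ℝ)) ∉ closure (farkasSet A a' Q) ↔
      ∃ μ : Y →L[ℝ] ℝ, (∀ y ∈ Q, 0 ≤ μ y) ∧ μ.comp A = a' :=
    ⟨exists_dual_of_zero_neg_one_notMem_closure_farkasSet A a' hQne hQconv hQcone,
      fun ⟨_, hμ, hμA⟩ => zero_neg_one_notMem_closure_farkasSet A a' hμ hμA⟩
  have hsub : ((0 : Y), (-1 : ℝ)) ∈ farkasSet A a' Q → ((0 : Y), (-1 : ℝ)) ∈ closure _ :=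
    fun h => subset_closure h
  rw [← hclosure]
  rw [zero_neg_one_mem_farkasSet_iff A a' hQcone] at hsub ⊢
  tauto
end

section
/- Let T be an index set, X a real normed space, (a'_t)_{t∈T} ⊆ X*, and α_t ≤ β_t reals. Define Λ := { Σ_t λ_t⁺ (a'_t, β_t) + Σ_t λ_t⁻ (−a'_t, −α_t) : λ ∈ ℝ^(T) } and N := cone({(a'_t, β_t) : t ∈ T} ∪ {(−a'_t, −α_t) : t ∈ T}) ⊆ X* × ℝ. Then Λ ⊆ N ⊆ Λ + {0} × ℝ≥0, and consequently N + {0} × ℝ≥0 = Λ + {0} × ℝ≥0. -/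
/-!
Since `λ⁺β − λ⁻α = λβ + λ⁻(β − α)` and `α ≤ β`, the cost `λ ↦ Σ_t (λ_t⁺ β_t − λ_t⁻ α_t)` is
sublinear on `ℝ^(T)`, while `λ ↦ Σ_t λ_t a'_t` is linear. Hence `Λ + {0} × ℝ≥0`, the set of pairs
lying above the graph of this linear/sublinear map, is a convex cone; it contains `0` and the
generators (take `λ = ±δ_t`), so it contains `N`. Conversely every point of `Λ` is the nonnegative
combination `Σ_t λ_t⁺ (a'_t, β_t) + λ_t⁻ (−a'_t, −α_t)` of generators, hence lies in `N`.
Adding `{0} × ℝ≥0`, which is closed under addition, to `Λ ⊆ N ⊆ Λ + {0} × ℝ≥0` gives the equality.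
-/

open Pointwise

/-- A convex cone: closed under addition and nonnegative scalar multiplication. -/
def IsConvexCone {Z : Type*} [AddCommGroup Z] [Module ℝ Z] (S : Set Z) : Prop :=
  (∀ a ∈ S, ∀ b ∈ S, a + b ∈ S) ∧ (∀ c : ℝ, 0 ≤ c → ∀ x ∈ S, c • x ∈ S)

theorem IsConvexCone.sum_mem {Z : Type*} [AddCommGroup Z] [Module ℝ Z] {S : Set Z}
    (hS : IsConvexCone S) (h0 : (0 : Z) ∈ S) {ι : Type*} (s : Finset ι) {g : ι → Z}
    (hg : ∀ i ∈ s, g i ∈ S) : ∑ i ∈ s, g i ∈ S :=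
  Finset.sum_induction g (· ∈ S) (fun a b ha hb => hS.1 a ha b hb) h0 hg

theorem Set.add_eq_add_of_subset_of_subset_add {G : Type*} [AddSemigroup G] {A B S : Set G}
    (hAB : A ⊆ B) (hBA : B ⊆ A + S) (hS : S + S ⊆ S) : B + S = A + S :=
  (Set.add_subset_add_right hBA |>.trans <| (add_assoc A S S).subset.trans <|
    Set.add_subset_add_left hS).antisymm (Set.add_subset_add_right hAB)

theorem Finsupp.sum_add_le {α M N : Type*} [AddZeroClass M] [AddCommMonoid N] [PartialOrder N]
    [IsOrderedAddMonoid N] {h : α → M → N} (h0 : ∀ a, h a 0 = 0)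
    (hadd : ∀ a x y, h a (x + y) ≤ h a x + h a y) (f g : α →₀ M) :
    (f + g).sum h ≤ f.sum h + g.sum h := by
  classical
  rw [Finsupp.sum_of_support_subset _ Finsupp.support_add _ (fun a _ => h0 a),
    Finsupp.sum_of_support_subset f Finset.subset_union_left _ (fun a _ => h0 a),
    Finsupp.sum_of_support_subset g Finset.subset_union_right _ (fun a _ => h0 a),
    ← Finset.sum_add_distrib]
  exact Finset.sum_le_sum fun a _ => hadd a (f a) (g a)

theorem mem_range_add_zero_prod_Ici {M Z : Type*} [AddCommGroup Z] {F : M → Z × ℝ} {p : Z × ℝ} :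
    p ∈ Set.range F + ({0} : Set Z) ×ˢ Set.Ici 0 ↔ ∃ m, (F m).1 = p.1 ∧ (F m).2 ≤ p.2 := by
  constructor
  · rintro ⟨_, ⟨m, rfl⟩, q, ⟨hq1, hq2⟩, rfl⟩
    refine ⟨m, ?_, ?_⟩
    · simp [Set.mem_singleton_iff.mp hq1]
    · simpa using Set.mem_Ici.mp hq2
  · rintro ⟨m, h1, h2⟩
    exact ⟨F m, ⟨m, rfl⟩, (0, p.2 - (F m).2), ⟨rfl, sub_nonneg.2 h2⟩,
      Prod.ext (by simp [h1]) (by simp)⟩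

section Epigraph

variable {M Z : Type*} [AddCommGroup M] [Module ℝ M] [AddCommGroup Z] [Module ℝ Z]

theorem isConvexCone_range_add_zero_prod_Ici (f : M →ₗ[ℝ] Z) {g : M → ℝ}
    (hg_add : ∀ x y, g (x + y) ≤ g x + g y) (hg_smul : ∀ c : ℝ, 0 ≤ c → ∀ x, g (c • x) = c * g x) :
    IsConvexCone (Set.range (fun m => (f m, g m)) + ({0} : Set Z) ×ˢ Set.Ici 0) := by
  simp only [IsConvexCone, mem_range_add_zero_prod_Ici]
  constructor
  · rintro p ⟨m, hm1, hm2⟩ q ⟨n, hn1, hn2⟩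
    exact ⟨m + n, by simp [← hm1, ← hn1], (hg_add m n).trans (add_le_add hm2 hn2)⟩
  · rintro c hc p ⟨m, hm1, hm2⟩
    refine ⟨c • m, by simp [← hm1], ?_⟩
    simpa [hg_smul c hc] using mul_le_mul_of_nonneg_left hm2 hc

theorem zero_mem_range_add_zero_prod_Ici (f : M →ₗ[ℝ] Z) {g : M → ℝ} (hg : g 0 = 0) :
    (0 : Z × ℝ) ∈ Set.range (fun m => (f m, g m)) + ({0} : Set Z) ×ˢ Set.Ici 0 :=
  mem_range_add_zero_prod_Ici.2 ⟨0, by simp, by simp [hg]⟩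

end Epigraph

def twoSlope (a b c : ℝ) : ℝ := max c 0 * b - max (-c) 0 * a

section TwoSlope

variable {a b : ℝ}

theorem twoSlope_eq (a b c : ℝ) : twoSlope a b c = c * b + max (-c) 0 * (b - a) := by
  rcases le_total 0 c with h | h
  · simp [twoSlope, max_eq_left h, max_eq_right (neg_nonpos.2 h)]
  · simp only [twoSlope, max_eq_right h, max_eq_left (neg_nonneg.2 h)]; ring

@[simp] theorem twoSlope_zero : twoSlope a b 0 = 0 := by simp [twoSlope]

@[simp] theorem twoSlope_one : twoSlope a b 1 = b := by simp [twoSlope]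

@[simp] theorem twoSlope_neg_one : twoSlope a b (-1) = -a := by simp [twoSlope]

theorem twoSlope_add_le (hab : a ≤ b) (c d : ℝ) :
    twoSlope a b (c + d) ≤ twoSlope a b c + twoSlope a b d := by
  have hneg : max (-(c + d)) 0 ≤ max (-c) 0 + max (-d) 0 :=
    max_le (by linarith [le_max_left (-c) 0, le_max_left (-d) 0]) (by positivity)
  simp only [twoSlope_eq]
  nlinarith [mul_le_mul_of_nonneg_right hneg (sub_nonneg.2 hab)]

theorem twoSlope_mul {r : ℝ} (hr : 0 ≤ r) (c : ℝ) : twoSlope a b (r * c) = r * twoSlope a b c := by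
  have hpos : max (r * c) 0 = r * max c 0 := by rw [mul_max_of_nonneg _ _ hr, mul_zero]
  have hneg : max (-(r * c)) 0 = r * max (-c) 0 := by
    rw [mul_max_of_nonneg _ _ hr, mul_zero, mul_neg]
  simp only [twoSlope, hpos, hneg]
  ring

theorem smul_prod_twoSlope {Z : Type*} [AddCommGroup Z] [Module ℝ Z] (v : Z) (c : ℝ) :
    (c • v, twoSlope a b c) = max c 0 • (v, b) + max (-c) 0 • (-v, -a) := by
  refine Prod.ext ?_ ?_
  · simp [← sub_eq_add_neg, ← sub_smul]
  · simp only [twoSlope, Prod.smul_mk, smul_eq_mul, smul_neg, mul_neg, Prod.mk_add_mk]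
    ring

end TwoSlope

theorem IsConvexCone.prod_linearCombination_sum_twoSlope_mem {T Z : Type*} [AddCommGroup Z]
    [Module ℝ Z] {S : Set (Z × ℝ)} (hS : IsConvexCone S) (h0 : (0 : Z × ℝ) ∈ S) {u : T → Z}
    {α β : T → ℝ} (hpos : ∀ t, (u t, β t) ∈ S) (hneg : ∀ t, (-u t, -α t) ∈ S) (l : T →₀ ℝ) :
    (Finsupp.linearCombination ℝ u l, l.sum fun t c => twoSlope (α t) (β t) c) ∈ S := by
  have hsum : (Finsupp.linearCombination ℝ u l, l.sum fun t c => twoSlope (α t) (β t) c) =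
      l.sum fun t c => (c • u t, twoSlope (α t) (β t) c) := by
    simp [Finsupp.linearCombination_apply, Finsupp.sum, Prod.ext_iff, Prod.fst_sum, Prod.snd_sum]
  rw [hsum, Finsupp.sum]
  refine hS.sum_mem h0 _ fun t _ => ?_
  rw [smul_prod_twoSlope]
  exact hS.1 _ (hS.2 _ (le_max_right _ _) _ (hpos t)) _ (hS.2 _ (le_max_right _ _) _ (hneg t))

/-- Proposition 4.2: with
`Λ = {(Σ_t λ_t a'_t, Σ_t (λ_t⁺ β_t − λ_t⁻ α_t)) : λ finitely supported}` and `N` the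
convex cone (containing the origin) generated by `{(a'_t, β_t)} ∪ {(−a'_t, −α_t)}`,
one has `Λ ⊆ N ⊆ Λ + {0} × ℝ≥0` and `N + {0} × ℝ≥0 = Λ + {0} × ℝ≥0`. -/
theorem second_moment_cone_vs_Lambda {T : Type*} {X : Type*}
    [NormedAddCommGroup X] [NormedSpace ℝ X]
    (a' : T → (X →L[ℝ] ℝ)) (α β : T → ℝ) (hαβ : ∀ t, α t ≤ β t)
    (Λ : Set ((X →L[ℝ] ℝ) × ℝ))
    (hΛ : Λ = {p | ∃ l : T →₀ ℝ,
        p = (l.sum fun t c => c • a' t,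
             l.sum fun t c => max c 0 * β t - max (-c) 0 * α t)})
    (N : Set ((X →L[ℝ] ℝ) × ℝ))
    (hNcone : IsConvexCone N) (hN0 : (0 : (X →L[ℝ] ℝ) × ℝ) ∈ N)
    (hNgen : (Set.range fun t => (a' t, β t)) ∪ (Set.range fun t => (-a' t, -α t)) ⊆ N)
    (hNmin : ∀ M : Set ((X →L[ℝ] ℝ) × ℝ), IsConvexCone M → (0 : (X →L[ℝ] ℝ) × ℝ) ∈ M →
        (Set.range fun t => (a' t, β t)) ∪ (Set.range fun t => (-a' t, -α t)) ⊆ M → N ⊆ M) :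
    Λ ⊆ N ∧ N ⊆ Λ + ({0} : Set (X →L[ℝ] ℝ)) ×ˢ Set.Ici (0 : ℝ) ∧
      N + ({0} : Set (X →L[ℝ] ℝ)) ×ˢ Set.Ici (0 : ℝ) =
        Λ + ({0} : Set (X →L[ℝ] ℝ)) ×ˢ Set.Ici (0 : ℝ) := by
  set S := ({0} : Set (X →L[ℝ] ℝ)) ×ˢ Set.Ici (0 : ℝ)
  set cost : (T →₀ ℝ) → ℝ := fun l => l.sum fun t c => twoSlope (α t) (β t) c
  have hΛ_range : Λ = Set.range fun l => (Finsupp.linearCombination ℝ a' l, cost l) := by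
    rw [hΛ]; ext p; simp [Finsupp.linearCombination_apply, cost, twoSlope, eq_comm]
  have hcost_add : ∀ l m, cost (l + m) ≤ cost l + cost m :=
    Finsupp.sum_add_le (fun _ => twoSlope_zero) fun t => twoSlope_add_le (hαβ t)
  have hcost_smul : ∀ c : ℝ, 0 ≤ c → ∀ l, cost (c • l) = c * cost l := fun c hc l => by
    simp only [cost, Finsupp.sum_smul_index fun _ => twoSlope_zero, Finsupp.mul_sum,
      twoSlope_mul hc]
  have hΛN : Λ ⊆ N := by
    rw [hΛ_range]; rintro _ ⟨l, rfl⟩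
    exact hNcone.prod_linearCombination_sum_twoSlope_mem hN0 (fun t => hNgen (.inl ⟨t, rfl⟩))
      (fun t => hNgen (.inr ⟨t, rfl⟩)) l
  have hNΛS : N ⊆ Λ + S := by
    rw [hΛ_range]
    refine hNmin _ (isConvexCone_range_add_zero_prod_Ici _ hcost_add hcost_smul)
      (zero_mem_range_add_zero_prod_Ici _ Finsupp.sum_zero_index) ?_
    rintro _ (⟨t, rfl⟩ | ⟨t, rfl⟩)
    · exact mem_range_add_zero_prod_Ici.2 ⟨Finsupp.single t 1, by simp, by simp [cost]⟩
    · exact mem_range_add_zero_prod_Ici.2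
        ⟨Finsupp.single t (-1), by simp, by simp [cost, -Finsupp.single_neg]⟩
  have hSS : S + S ⊆ S := by
    rintro _ ⟨p, ⟨hp1, hp2⟩, q, ⟨hq1, hq2⟩, rfl⟩
    exact ⟨by simp_all, Set.mem_Ici.2 (add_nonneg hp2 hq2)⟩
  exact ⟨hΛN, hNΛS, Set.add_eq_add_of_subset_of_subset_add hΛN hNΛS hSS⟩
end

section
/- Let X, Y be real normed spaces, A : X → Y continuous linear, C ⊆ X and D ⊆ Y nonempty closed convex sets, f : X → ℝ ∪ {+∞} proper lsc convex, and B := A⁻¹(D). Then epi f* + K ⊆ epi (f + δ_{B∩C})*, where K := epi σ_C + {(A*λ, σ_D(λ)) : σ_D(λ) < ∞}; consequently, the weak-* closure of epi f* + K is contained in epi (f + δ_{B∩C})*. -/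
/-! Each summand of `epi f* + K` is the epigraph of a conjugate, of `f`, `δ_C` and `δ_{A⁻¹D}`
(the last because `σ_D(λ) ≥ ⟨λ, A x⟩` for `x ∈ A⁻¹D`), and a sum of conjugate epigraphs lies in
the conjugate epigraph of the sum of the functions. The target is weak-* closed, being an
intersection of closed half-spaces. -/

open Pointwise

section EpiConj

variable {X : Type*} [AddCommGroup X] [Module ℝ X] [TopologicalSpace X]

/-- The epigraph of the Fenchel conjugate `(g + δ_T)*` on `X* × ℝ`. -/
def epiConj (T : Set X) (g : X → ℝ) : Set (WeakDual ℝ X × ℝ) :=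
  {p | ∀ x ∈ T, p.1 x - g x ≤ p.2}

theorem epiConj_zero (T : Set X) : epiConj T 0 = {p | ∀ x ∈ T, p.1 x ≤ p.2} := by
  simp [epiConj]

theorem epiConj_anti {T T' : Set X} (h : T ⊆ T') (g : X → ℝ) :
    epiConj T' g ⊆ epiConj T g :=
  fun _ hp x hx => hp x (h hx)

theorem epiConj_add_subset (T T' : Set X) (g g' : X → ℝ) :
    epiConj T g + epiConj T' g' ⊆ epiConj (T ∩ T') (g + g') := by
  rintro _ ⟨p, hp, q, hq, rfl⟩ x ⟨hxT, hxT'⟩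
  have := hp x hxT
  have := hq x hxT'
  change p.1 x + q.1 x - (g x + g' x) ≤ p.2 + q.2
  linarith

theorem isClosed_epiConj (T : Set X) (g : X → ℝ) : IsClosed (epiConj T g) := by
  simp only [epiConj, Set.ofPred_forall]
  exact isClosed_biInter fun x _ =>
    isClosed_le (((WeakDual.eval_continuous x).comp continuous_fst).sub continuous_const)
      continuous_snd

end EpiConj

theorem setOf_comp_sSup_subset_epiConj_preimage {X Y : Type*}
    [NormedAddCommGroup X] [NormedSpace ℝ X] [NormedAddCommGroup Y] [NormedSpace ℝ Y]
    (A : X →L[ℝ] Y) (D : Set Y) :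
    {p : WeakDual ℝ X × ℝ | ∃ l : Y →L[ℝ] ℝ, BddAbove ((fun y => l y) '' D) ∧
      p = (toWeakDual (l.comp A), sSup ((fun y => l y) '' D))} ⊆ epiConj (A ⁻¹' D) 0 := by
  rintro _ ⟨l, hbdd, rfl⟩ x hx
  change l (A x) - 0 ≤ _
  simpa using le_csSup hbdd ⟨A x, hx, rfl⟩

theorem epi_conj_add_K_subset_general {X Y : Type*}
    [NormedAddCommGroup X] [NormedSpace ℝ X] [NormedAddCommGroup Y] [NormedSpace ℝ Y]
    (A : X →L[ℝ] Y) (C : Set X) (D : Set Y)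
    (S : Set X) (f : X → ℝ)
    (epif K E : Set (WeakDual ℝ X × ℝ))
    (hepif : epif = {p : WeakDual ℝ X × ℝ | ∀ v ∈ S, p.1 v - f v ≤ p.2})
    (hK : K = {p : WeakDual ℝ X × ℝ | ∀ x ∈ C, p.1 x ≤ p.2}
        + {p : WeakDual ℝ X × ℝ | ∃ l : Y →L[ℝ] ℝ, BddAbove ((fun y => l y) '' D) ∧
            p = (toWeakDual (l.comp A), sSup ((fun y => l y) '' D))})
    (hE : E = {p : WeakDual ℝ X × ℝ | ∀ x ∈ A ⁻¹' D ∩ C ∩ S, p.1 x - f x ≤ p.2}) :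
    epif + K ⊆ E ∧ closure (epif + K) ⊆ E := by
  have hepif' : epif = epiConj S f := hepif
  have hE' : E = epiConj (A ⁻¹' D ∩ C ∩ S) f := hE
  rw [← epiConj_zero] at hK
  rw [hE']
  have hsub : epif + K ⊆ epiConj (A ⁻¹' D ∩ C ∩ S) f := calc
    epif + K ⊆ epiConj S f + (epiConj C 0 + epiConj (A ⁻¹' D) 0) := by
      rw [hepif', hK]
      gcongr
      exact setOf_comp_sSup_subset_epiConj_preimage A D
    _ ⊆ epiConj S f + epiConj (C ∩ A ⁻¹' D) (0 + 0) :=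
      Set.add_subset_add_left (epiConj_add_subset _ _ _ _)
    _ ⊆ epiConj (S ∩ (C ∩ A ⁻¹' D)) (f + (0 + 0)) := epiConj_add_subset _ _ _ _
    _ ⊆ epiConj (A ⁻¹' D ∩ C ∩ S) f := by
      rw [add_zero, add_zero]
      refine epiConj_anti ?_ f
      rintro x ⟨⟨hD, hC⟩, hS⟩
      exact ⟨hS, hC, hD⟩
  exact ⟨hsub, (isClosed_epiConj _ _).closure_subset_iff.2 hsub⟩

/-- Lemma 6.3: `epi f* + K ⊆ epi (f + δ_{B∩C})*`, hence the weak-* closure of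
`epi f* + K` is also contained in `epi (f + δ_{B∩C})*`, where `B = A⁻¹(D)` and
`K = epi σ_C + Λ`.  The proper lsc convex `f` is modelled by its effective domain `S`
and a real-valued `f` convex on `S` with closed epigraph. -/
theorem epi_conj_add_K_subset {X Y : Type*}
    [NormedAddCommGroup X] [NormedSpace ℝ X] [NormedAddCommGroup Y] [NormedSpace ℝ Y]
    (A : X →L[ℝ] Y) (C : Set X) (D : Set Y)
    (hCne : C.Nonempty) (hCcl : IsClosed C) (hCconv : Convex ℝ C)
    (hDne : D.Nonempty) (hDcl : IsClosed D) (hDconv : Convex ℝ D)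
    (S : Set X) (f : X → ℝ) (hSne : S.Nonempty) (hf : ConvexOn ℝ S f)
    (hlsc : IsClosed {p : X × ℝ | p.1 ∈ S ∧ f p.1 ≤ p.2})
    (epif K E : Set (WeakDual ℝ X × ℝ))
    (hepif : epif = {p : WeakDual ℝ X × ℝ | ∀ v ∈ S, p.1 v - f v ≤ p.2})
    (hK : K = {p : WeakDual ℝ X × ℝ | ∀ x ∈ C, p.1 x ≤ p.2}
        + {p : WeakDual ℝ X × ℝ | ∃ l : Y →L[ℝ] ℝ, BddAbove ((fun y => l y) '' D) ∧
            p = (toWeakDual (l.comp A), sSup ((fun y => l y) '' D))})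
    (hE : E = {p : WeakDual ℝ X × ℝ | ∀ x ∈ A ⁻¹' D ∩ C ∩ S, p.1 x - f x ≤ p.2}) :
    epif + K ⊆ E ∧ closure (epif + K) ⊆ E :=
  epi_conj_add_K_subset_general A C D S f epif K E hepif hK hE
end

section
/- Let X, Y be real normed spaces, A : X → Y continuous linear, C ⊆ X and D ⊆ Y nonempty closed convex sets, f : X → ℝ ∪ {+∞} proper lsc convex, and x̄ ∈ C ∩ A⁻¹(D) ∩ dom f. If there exist u', v' ∈ X* and λ ∈ Y* with u' + v' = −A*λ and f*(u') + σ_C(v') + σ_D(λ) ≤ −f(x̄), then u' ∈ ∂f(x̄), v' ∈ N(C, x̄), λ ∈ N(D, A x̄), and 0 ∈ ∂f(x̄) + N(C, x̄) + A*(N(D, A x̄)); moreover, this inclusion implies x̄ is a minimizer of f over C ∩ A⁻¹(D). -/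
/-!
Evaluating `u' + v' = -A*λ` at `x̄` gives `(u' x̄ - f x̄) + v' x̄ + λ (A x̄) = -f x̄`. The three
terms are bounded above by `f*(u')`, `σ_C(v')` and `σ_D(λ)`, whose sum is at most `-f x̄`, so each
supremum is attained at `x̄` (resp. `A x̄`); this is exactly `u' ∈ ∂f(x̄)`, `v' ∈ N(C, x̄)` and
`λ ∈ N(D, A x̄)`. Conversely `A*` maps `N(D, A x̄)` into `N(A⁻¹(D), x̄)` and normal cones add
under intersection, so `0 ∈ ∂f(x̄) + N(C ∩ A⁻¹(D), x̄)`, which makes `x̄` a minimizer.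
-/

namespace ConvexOptimality

variable {X Y : Type*} [AddCommGroup X] [Module ℝ X] [TopologicalSpace X]
  [AddCommGroup Y] [Module ℝ Y] [TopologicalSpace Y]

def IsSubgradientOn (S : Set X) (f : X → ℝ) (x : X) (p : X →L[ℝ] ℝ) : Prop :=
  ∀ y ∈ S, f x + p (y - x) ≤ f y

def IsNormalAt (C : Set X) (x : X) (q : X →L[ℝ] ℝ) : Prop :=
  ∀ y ∈ C, q (y - x) ≤ 0

theorem isSubgradientOn_iff {S : Set X} {f : X → ℝ} {x : X} {p : X →L[ℝ] ℝ} :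
    IsSubgradientOn S f x p ↔ ∀ y ∈ S, p y - f y ≤ p x - f x := by
  refine forall₂_congr fun y _ => ?_
  rw [map_sub]
  constructor <;> intro h <;> linarith

theorem isNormalAt_iff {C : Set X} {x : X} {q : X →L[ℝ] ℝ} :
    IsNormalAt C x q ↔ ∀ y ∈ C, q y ≤ q x := by
  refine forall₂_congr fun y _ => ?_
  rw [map_sub, sub_nonpos]

theorem IsNormalAt.comp_preimage {D : Set Y} {x : X} {μ : Y →L[ℝ] ℝ} (A : X →L[ℝ] Y)
    (hμ : IsNormalAt D (A x) μ) : IsNormalAt (A ⁻¹' D) x (μ.comp A) := fun y hy => by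
  simpa only [ContinuousLinearMap.comp_apply, map_sub] using hμ (A y) hy

theorem IsNormalAt.add_inter {C D : Set X} {x : X} {q r : X →L[ℝ] ℝ}
    (hq : IsNormalAt C x q) (hr : IsNormalAt D x r) : IsNormalAt (C ∩ D) x (q + r) :=
  fun y hy => by
    rw [add_apply]
    linarith [hq y hy.1, hr y hy.2]

theorem IsSubgradientOn.isMinOn_inter {S C : Set X} {f : X → ℝ} {x : X} {p : X →L[ℝ] ℝ}
    (hp : IsSubgradientOn S f x p) (hC : IsNormalAt C x (-p)) : IsMinOn f (C ∩ S) x :=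
  isMinOn_iff.mpr fun y hy => by
    have hneg : -p (y - x) ≤ 0 := hC y hy.1
    linarith [hp y hy.2]

theorem isMinOn_of_zero_mem_subgradient_add_normal {S C : Set X} {D : Set Y} {f : X → ℝ}
    {x : X} (A : X →L[ℝ] Y) {p q : X →L[ℝ] ℝ} {μ : Y →L[ℝ] ℝ} (hp : IsSubgradientOn S f x p)
    (hq : IsNormalAt C x q) (hμ : IsNormalAt D (A x) μ) (hzero : p + q + μ.comp A = 0) :
    IsMinOn f (C ∩ A ⁻¹' D ∩ S) x := by
  have hneg : -p = q + μ.comp A := by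
    rw [neg_eq_iff_add_eq_zero, ← add_assoc, hzero]
  exact hp.isMinOn_inter (hneg ▸ hq.add_inter (hμ.comp_preimage A))

theorem isSubgradientOn_isNormalAt_of_dual_le {S C : Set X} {D : Set Y} {f : X → ℝ} {x : X}
    (A : X →L[ℝ] Y) {u' v' : X →L[ℝ] ℝ} {l : Y →L[ℝ] ℝ} {r s t : ℝ}
    (hzero : u' + v' + l.comp A = 0) (hxS : x ∈ S) (hxC : x ∈ C) (hxD : A x ∈ D)
    (hr : ∀ y ∈ S, u' y - f y ≤ r) (hs : ∀ y ∈ C, v' y ≤ s) (ht : ∀ d ∈ D, l d ≤ t)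
    (hrst : r + s + t ≤ -f x) :
    IsSubgradientOn S f x u' ∧ IsNormalAt C x v' ∧ IsNormalAt D (A x) l := by
  have hx : u' x + v' x + l (A x) = 0 := by
    simpa using DFunLike.congr_fun hzero x
  have hrx := hr x hxS
  have hsx := hs x hxC
  have htx := ht (A x) hxD
  exact ⟨isSubgradientOn_iff.mpr fun y hy => (hr y hy).trans (by linarith),
    isNormalAt_iff.mpr fun y hy => (hs y hy).trans (by linarith),
    isNormalAt_iff.mpr fun y hy => (ht y hy).trans (by linarith)⟩

end ConvexOptimality

open ConvexOptimality in
theorem optimality_conditions_general {X Y : Type*}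
    [NormedAddCommGroup X] [NormedSpace ℝ X] [NormedAddCommGroup Y] [NormedSpace ℝ Y]
    (A : X →L[ℝ] Y) (C : Set X) (D : Set Y)
    (S : Set X) (f : X → ℝ)
    (xb : X) (hxb : xb ∈ C ∩ A ⁻¹' D ∩ S)
    (u' v' : X →L[ℝ] ℝ) (l : Y →L[ℝ] ℝ)
    (hsum : u' + v' = -(l.comp A))
    (hineq : ∃ r s t : ℝ, (∀ v ∈ S, u' v - f v ≤ r) ∧ (∀ x ∈ C, v' x ≤ s) ∧
        (∀ d ∈ D, l d ≤ t) ∧ r + s + t ≤ -f xb) :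
    ((∀ x ∈ S, f xb + u' (x - xb) ≤ f x) ∧
     (∀ x ∈ C, v' (x - xb) ≤ 0) ∧
     (∀ y ∈ D, l (y - A xb) ≤ 0) ∧
     (∃ (p q : X →L[ℝ] ℝ) (μ : Y →L[ℝ] ℝ),
        (∀ x ∈ S, f xb + p (x - xb) ≤ f x) ∧
        (∀ x ∈ C, q (x - xb) ≤ 0) ∧
        (∀ y ∈ D, μ (y - A xb) ≤ 0) ∧
        p + q + μ.comp A = 0)) ∧
    ((∃ (p q : X →L[ℝ] ℝ) (μ : Y →L[ℝ] ℝ),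
        (∀ x ∈ S, f xb + p (x - xb) ≤ f x) ∧
        (∀ x ∈ C, q (x - xb) ≤ 0) ∧
        (∀ y ∈ D, μ (y - A xb) ≤ 0) ∧
        p + q + μ.comp A = 0) →
      ∀ x ∈ C ∩ A ⁻¹' D ∩ S, f xb ≤ f x) := by
  obtain ⟨⟨hxC, hxD⟩, hxS⟩ := hxb
  obtain ⟨r, s, t, hr, hs, ht, hrst⟩ := hineq
  have hzero : u' + v' + l.comp A = 0 := add_eq_zero_iff_eq_neg.mpr hsum
  obtain ⟨hu, hv, hl⟩ :=
    isSubgradientOn_isNormalAt_of_dual_le A hzero hxS hxC hxD hr hs ht hrst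
  refine ⟨⟨hu, hv, hl, u', v', l, hu, hv, hl, hzero⟩, ?_⟩
  rintro ⟨p, q, μ, hp, hq, hμ, hpqμ⟩
  exact isMinOn_iff.mp (isMinOn_of_zero_mem_subgradient_add_normal A hp hq hμ hpqμ)

/-- Proposition 6.1 (optimality conditions), implications (ii) ⇒ (iii) ⇒ (i).
The proper lsc convex `f : X → ℝ ∪ {+∞}` is modelled by its effective domain `S` and a
real-valued `f` convex on `S` with closed epigraph.  If `u' + v' = −A*λ` and
`f*(u') + σ_C(v') + σ_D(λ) ≤ −f(x̄)` (encoded via real bounds `r, s, t`), then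
`u' ∈ ∂f(x̄)`, `v' ∈ N(C, x̄)`, `λ ∈ N(D, A x̄)` and
`0 ∈ ∂f(x̄) + N(C, x̄) + A*(N(D, A x̄))`; moreover the latter inclusion implies that `x̄`
minimizes `f` over `C ∩ A⁻¹(D)`. -/
theorem optimality_conditions {X Y : Type*}
    [NormedAddCommGroup X] [NormedSpace ℝ X] [NormedAddCommGroup Y] [NormedSpace ℝ Y]
    (A : X →L[ℝ] Y) (C : Set X) (D : Set Y)
    (hCne : C.Nonempty) (hCcl : IsClosed C) (hCconv : Convex ℝ C)
    (hDne : D.Nonempty) (hDcl : IsClosed D) (hDconv : Convex ℝ D)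
    (S : Set X) (f : X → ℝ) (hSne : S.Nonempty) (hf : ConvexOn ℝ S f)
    (hlsc : IsClosed {p : X × ℝ | p.1 ∈ S ∧ f p.1 ≤ p.2})
    (xb : X) (hxb : xb ∈ C ∩ A ⁻¹' D ∩ S)
    (u' v' : X →L[ℝ] ℝ) (l : Y →L[ℝ] ℝ)
    (hsum : u' + v' = -(l.comp A))
    (hineq : ∃ r s t : ℝ, (∀ v ∈ S, u' v - f v ≤ r) ∧ (∀ x ∈ C, v' x ≤ s) ∧
        (∀ d ∈ D, l d ≤ t) ∧ r + s + t ≤ -f xb) :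
    ((∀ x ∈ S, f xb + u' (x - xb) ≤ f x) ∧
     (∀ x ∈ C, v' (x - xb) ≤ 0) ∧
     (∀ y ∈ D, l (y - A xb) ≤ 0) ∧
     (∃ (p q : X →L[ℝ] ℝ) (μ : Y →L[ℝ] ℝ),
        (∀ x ∈ S, f xb + p (x - xb) ≤ f x) ∧
        (∀ x ∈ C, q (x - xb) ≤ 0) ∧
        (∀ y ∈ D, μ (y - A xb) ≤ 0) ∧
        p + q + μ.comp A = 0)) ∧
    ((∃ (p q : X →L[ℝ] ℝ) (μ : Y →L[ℝ] ℝ),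
        (∀ x ∈ S, f xb + p (x - xb) ≤ f x) ∧
        (∀ x ∈ C, q (x - xb) ≤ 0) ∧
        (∀ y ∈ D, μ (y - A xb) ≤ 0) ∧
        p + q + μ.comp A = 0) →
      ∀ x ∈ C ∩ A ⁻¹' D ∩ S, f xb ≤ f x) :=
  optimality_conditions_general A C D S f xb hxb u' v' l hsum hineq
end
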